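/- Let A, B, C be connected finite graphs and let f : B → A and g : C → A be confluent epimorphisms, and let D be their standard amalgamation with projections f₀ : D → B and g₀ : D → C. Then for every connected component P of D one has f₀(P) = V(B) and g₀(P) = V(C). -/

import Mathlib

/-- A (reflexive, symmetric) graph relation. -/
def IsGraph {V : Type*} (E : V → V → Prop) : Prop :=
  (∀ v, E v v) ∧ ∀ a b, E a b → E b a

/-- A subset `S` of the vertices of a graph is connected if it cannot be partitioned
into two nonempty sets with no edge between them. -/
def ConnSet {V : Type*} (E : V → V → Prop) (S : Set V) : Prop :=
  ¬ ∃ P Q : Set V, P.Nonempty ∧ Q.Nonempty ∧ Disjoint P Q ∧ P ∪ Q = S ∧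
      ∀ a ∈ P, ∀ b ∈ Q, ¬ E a b

/-- `C` is a (connected) component of `S`: a maximal connected subset of `S`. -/
def IsComponent {V : Type*} (E : V → V → Prop) (S C : Set V) : Prop :=
  C ⊆ S ∧ ConnSet E C ∧ ∀ C' : Set V, C ⊆ C' → C' ⊆ S → ConnSet E C' → C' = C

/-- An epimorphism of graphs: edge-preserving, surjective on vertices and on edges. -/
def IsEpi {V W : Type*} (EG : V → V → Prop) (EH : W → W → Prop) (f : V → W) : Prop :=
  (∀ a b, EG a b → EH (f a) (f b)) ∧ Function.Surjective f ∧
    ∀ c d, EH c d → ∃ a b, EG a b ∧ f a = c ∧ f b = d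

/-- A map is monotone if the preimage of every vertex is connected. -/
def IsMonotone {V W : Type*} (EG : V → V → Prop) (f : V → W) : Prop :=
  ∀ y : W, ConnSet EG (f ⁻¹' {y})

/-- A map is light if no edge joins two distinct points of a fiber. -/
def IsLight {V W : Type*} (EG : V → V → Prop) (f : V → W) : Prop :=
  ∀ a b : V, f a = f b → a ≠ b → ¬ EG a b

/-- Confluence: every component of the preimage of a connected set maps onto that set. -/
def IsConfluent {V W : Type*} (EG : V → V → Prop) (EH : W → W → Prop) (f : V → W) : Prop :=
  ∀ Q : Set W, ConnSet EH Q → ∀ C : Set V, IsComponent EG (f ⁻¹' Q) C → f '' C = Q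

/-- `l` is a (simple) path from `a` to `b` in the graph. -/
def IsPathList {V : Type*} (E : V → V → Prop) (a b : V) (l : List V) : Prop :=
  l.Nodup ∧ l.Chain' E ∧ l.head? = some a ∧ l.getLast? = some b

/-- A finite graph is a tree if any two distinct vertices are joined by a unique path. -/
def IsTreeRel {V : Type*} (E : V → V → Prop) : Prop :=
  ∀ a b : V, a ≠ b → ∃! l : List V, IsPathList E a b l

/-- Vertices of the standard amalgamation of `f : B → A` and `g : C → A`. -/
abbrev AmalgV {A B C : Type*} (f : B → A) (g : C → A) : Type _ :=
  {p : B × C // f p.1 = g p.2}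

/-- Edges of the standard amalgamation. -/
def AmalgE {A B C : Type*} (EB : B → B → Prop) (EC : C → C → Prop)
    (f : B → A) (g : C → A) : AmalgV f g → AmalgV f g → Prop :=
  fun p q => EB p.1.1 q.1.1 ∧ EC p.1.2 q.1.2

/-- First coordinate projection of the standard amalgamation. -/
def amalgFst {A B C : Type*} (f : B → A) (g : C → A) : AmalgV f g → B :=
  fun p => p.1.1

/-- Second coordinate projection of the standard amalgamation. -/
def amalgSnd {A B C : Type*} (f : B → A) (g : C → A) : AmalgV f g → C :=
  fun p => p.1.2

/-!
A component `P` of the amalgamation that contains a point `(b, c)` also contains a point over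
every neighbour `b'` of `b`: the component of `c` in `g⁻¹{f b, f b'}` maps onto `{f b, f b'}` by
confluence of `g`, and walking inside it from `c` to a point over `f b'` can be shadowed in `P`
by points whose first coordinate stays in `{b, b'}`. Since `B` is connected, `P` then lies over
all of `B`; the same argument with the roles of `f` and `g` exchanged gives `C`.
-/

open Set

section Connectedness

variable {V : Type*} {E : V → V → Prop}

theorem ConnSet.subset_or_subset {T P Q : Set V} (hT : ConnSet E T) (hTPQ : T ⊆ P ∪ Q)
    (hPQ : ∀ a ∈ P, ∀ b ∈ Q, ¬ E a b) : T ⊆ P ∨ T ⊆ Q := by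
  by_contra! h
  obtain ⟨⟨x, hxT, hxP⟩, ⟨y, hyT, hyQ⟩⟩ := And.intro (not_subset.1 h.1) (not_subset.1 h.2)
  refine hT ⟨T ∩ P, T \ P, ⟨y, hyT, (hTPQ hyT).resolve_right hyQ⟩, ⟨x, hxT, hxP⟩,
    disjoint_sdiff_inter.symm, inter_union_sdiff T P, ?_⟩
  rintro a ⟨-, haP⟩ b ⟨hbT, hbP⟩
  exact hPQ a haP b ((hTPQ hbT).resolve_left hbP)

theorem ConnSet.eq_of_forall_adj_mem {K T : Set V} (hK : ConnSet E K) (hTK : T ⊆ K)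
    (hT : T.Nonempty) (hcl : ∀ x ∈ T, ∀ y ∈ K, E x y → y ∈ T) : T = K := by
  refine hTK.antisymm ((hK.subset_or_subset (P := T) (Q := K \ T) (by simp) ?_).resolve_right ?_)
  · exact fun x hx y hy hxy => hy.2 (hcl x hx y hy.1 hxy)
  · obtain ⟨t, ht⟩ := hT
    exact fun h => (h (hTK ht)).2 ht

theorem connSet_of_forall_adj {S : Set V} (hS : ∀ x ∈ S, ∀ y ∈ S, E x y) : ConnSet E S :=
  fun ⟨_, _, ⟨p, hp⟩, ⟨q, hq⟩, _, hPQ, hno⟩ =>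
    hno p hp q hq (hS p (hPQ.subset (Or.inl hp)) q (hPQ.subset (Or.inr hq)))

theorem connSet_singleton (v : V) : ConnSet E {v} :=
  fun ⟨P, Q, ⟨p, hp⟩, ⟨q, hq⟩, hPQ, hU, _⟩ => by
    have hp' : p = v := hU.subset (Or.inl hp)
    have hq' : q = v := hU.subset (Or.inr hq)
    exact disjoint_left.mp hPQ (hp' ▸ hp) (hq' ▸ hq)

theorem connSet_pair {x y : V} (hxy : E x y) (hyx : E y x) : ConnSet E {x, y} := by
  rintro ⟨P, Q, ⟨p, hp⟩, ⟨q, hq⟩, hPQ, hU, hno⟩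
  have hp' : p ∈ ({x, y} : Set V) := hU.subset (Or.inl hp)
  have hq' : q ∈ ({x, y} : Set V) := hU.subset (Or.inr hq)
  rcases hp' with rfl | rfl <;> rcases hq' with rfl | rfl
  exacts [disjoint_left.mp hPQ hp hq, hno _ hp _ hq hxy, hno _ hp _ hq hyx,
    disjoint_left.mp hPQ hp hq]

theorem connSet_sUnion {𝒯 : Set (Set V)} {c : V} (h𝒯 : ∀ T ∈ 𝒯, ConnSet E T ∧ c ∈ T) :
    ConnSet E (⋃₀ 𝒯) := by
  rintro ⟨P, Q, ⟨p, hp⟩, ⟨q, hq⟩, hPQ, hU, hno⟩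
  have hside : ∀ T ∈ 𝒯, T ⊆ P ∨ T ⊆ Q := fun T hT =>
    (h𝒯 T hT).1.subset_or_subset (hU ▸ subset_sUnion_of_mem hT) hno
  obtain ⟨Tp, hTp, hpT⟩ := hU.subset (Or.inl hp)
  obtain ⟨Tq, hTq, hqT⟩ := hU.subset (Or.inr hq)
  have hcP : c ∈ P := (hside Tp hTp).resolve_right
    (fun h => disjoint_left.mp hPQ hp (h hpT)) (h𝒯 Tp hTp).2
  have hcQ : c ∈ Q := (hside Tq hTq).resolve_left
    (fun h => disjoint_left.mp hPQ (h hqT) hq) (h𝒯 Tq hTq).2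
  exact disjoint_left.mp hPQ hcP hcQ

theorem ConnSet.union {S T : Set V} (hS : ConnSet E S) (hT : ConnSet E T)
    (hST : (S ∩ T).Nonempty) : ConnSet E (S ∪ T) := by
  obtain ⟨c, hcS, hcT⟩ := hST
  rw [← sUnion_pair]
  exact connSet_sUnion (by rintro U (rfl | rfl) <;> constructor <;> assumption)

theorem exists_isComponent_mem {S : Set V} {c : V} (hc : c ∈ S) :
    ∃ K, IsComponent E S K ∧ c ∈ K := by
  let 𝒞 : Set (Set V) := {T | T ⊆ S ∧ c ∈ T ∧ ConnSet E T}
  have hc𝒞 : c ∈ ⋃₀ 𝒞 :=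
    mem_sUnion_of_mem (mem_singleton c) ⟨singleton_subset_iff.2 hc, rfl, connSet_singleton c⟩
  refine ⟨⋃₀ 𝒞, ⟨sUnion_subset fun T hT => hT.1, connSet_sUnion fun T hT => ⟨hT.2.2, hT.2.1⟩,
    fun K hK hKS hKc => (subset_sUnion_of_mem (S := 𝒞) ⟨hKS, hK hc𝒞, hKc⟩).antisymm hK⟩, hc𝒞⟩

theorem IsComponent.nonempty {S P : Set V} (hP : IsComponent E S P) (hS : S.Nonempty) :
    P.Nonempty := by
  obtain ⟨s, hs⟩ := hS
  by_contra h
  rw [not_nonempty_iff_eq_empty] at h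
  subst h
  exact singleton_ne_empty s
    (hP.2.2 {s} (empty_subset _) (singleton_subset_iff.2 hs) (connSet_singleton s))

theorem IsComponent.subset_of_connSet {S P T : Set V} (hP : IsComponent E S P)
    (hT : ConnSet E T) (hTS : T ⊆ S) (hTP : (P ∩ T).Nonempty) : T ⊆ P := by
  rw [← hP.2.2 (P ∪ T) subset_union_left (union_subset hP.1 hTS) (hP.2.1.union hT hTP)]
  exact subset_union_right

theorem IsComponent.mem_of_adj (hE : ∀ x y, E x y → E y x) {S P : Set V}
    (hP : IsComponent E S P) {x y : V} (hx : x ∈ P) (hy : y ∈ S) (hxy : E x y) : y ∈ P :=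
  hP.subset_of_connSet (connSet_pair hxy (hE x y hxy)) (pair_subset (hP.1 hx) hy)
    ⟨x, hx, mem_insert x _⟩ (mem_insert_of_mem x rfl)

end Connectedness

/-- `(π₁, π₂)` maps `D` onto the standard amalgamation of `f` and `g`, pulling back its edges.
Stated abstractly so that `IsAmalgamation.symm` can exchange the roles of `f` and `g`. -/
structure IsAmalgamation {A B C D : Type*} (EB : B → B → Prop) (EC : C → C → Prop)
    (ED : D → D → Prop) (f : B → A) (g : C → A) (π₁ : D → B) (π₂ : D → C) : Prop where
  comm : ∀ d, f (π₁ d) = g (π₂ d)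
  adj_iff : ∀ d d', ED d d' ↔ EB (π₁ d) (π₁ d') ∧ EC (π₂ d) (π₂ d')
  lift : ∀ b c, f b = g c → ∃ d, π₁ d = b ∧ π₂ d = c

theorem isAmalgamation_amalg {A B C : Type*} (EB : B → B → Prop) (EC : C → C → Prop)
    (f : B → A) (g : C → A) :
    IsAmalgamation EB EC (AmalgE EB EC f g) f g (amalgFst f g) (amalgSnd f g) :=
  ⟨fun d => d.2, fun _ _ => Iff.rfl, fun b c h => ⟨⟨(b, c), h⟩, by simp [amalgFst, amalgSnd]⟩⟩

namespace IsAmalgamation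

variable {A B C D : Type*} {EA : A → A → Prop} {EB : B → B → Prop} {EC : C → C → Prop}
  {ED : D → D → Prop} {f : B → A} {g : C → A} {π₁ : D → B} {π₂ : D → C}

theorem symm (h : IsAmalgamation EB EC ED f g π₁ π₂) : IsAmalgamation EC EB ED g f π₂ π₁ :=
  ⟨fun d => (h.comm d).symm, fun d d' => (h.adj_iff d d').trans and_comm,
    fun c b hcb => (h.lift b c hcb.symm).imp fun _ => And.symm⟩

theorem subset_image_fst_of_forall_adj (h : IsAmalgamation EB EC ED f g π₁ π₂)
    (hED : ∀ x y, ED x y → ED y x) (hEC : ∀ c, EC c c)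
    (hf : ∀ x y, EB x y → EA (f x) (f y)) (hg : IsConfluent EC EA g)
    {P : Set D} (hP : IsComponent ED univ P) {S : Set B} (hS : ∀ x ∈ S, ∀ y ∈ S, EB x y)
    {d : D} (hdP : d ∈ P) (hdS : π₁ d ∈ S) : S ⊆ π₁ '' P := by
  have hmem : ∀ {d₀ d₁}, d₀ ∈ P → π₁ d₀ ∈ S → π₁ d₁ ∈ S → EC (π₂ d₀) (π₂ d₁) → d₁ ∈ P :=
    fun hd₀ h₀ h₁ hC => hP.mem_of_adj hED hd₀ trivial ((h.adj_iff _ _).2 ⟨hS _ h₀ _ h₁, hC⟩)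
  have hQ : ConnSet EA (f '' S) := by
    refine connSet_of_forall_adj ?_
    rintro _ ⟨x, hx, rfl⟩ _ ⟨y, hy, rfl⟩
    exact hf x y (hS x hx y hy)
  obtain ⟨K, hK, hcK⟩ := exists_isComponent_mem (E := EC) (S := g ⁻¹' (f '' S)) (c := π₂ d)
    ⟨π₁ d, hdS, h.comm d⟩
  have hTK : {z ∈ K | ∃ d₀ ∈ P, π₁ d₀ ∈ S ∧ π₂ d₀ = z} = K := by
    refine hK.2.1.eq_of_forall_adj_mem (sep_subset _ _) ⟨_, hcK, d, hdP, hdS, rfl⟩ ?_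
    rintro z ⟨-, d₀, hd₀P, hd₀S, rfl⟩ w hwK hzw
    obtain ⟨b₁, hb₁S, hb₁⟩ := hK.1 hwK
    obtain ⟨d₁, rfl, rfl⟩ := h.lift b₁ w hb₁
    exact ⟨hwK, d₁, hmem hd₀P hd₀S hb₁S hzw, hb₁S, rfl⟩
  intro b hb
  obtain ⟨c, hcK, hc⟩ : f b ∈ g '' K := hg _ hQ K hK ▸ mem_image_of_mem f hb
  obtain ⟨-, d₀, hd₀P, hd₀S, rfl⟩ := hTK.symm ▸ hcK
  obtain ⟨d₁, rfl, hd₁⟩ := h.lift b _ hc.symm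
  exact ⟨d₁, hmem hd₀P hd₀S hb (hd₁ ▸ hEC _), rfl⟩

theorem image_fst_eq_univ (h : IsAmalgamation EB EC ED f g π₁ π₂) (hB : IsGraph EB)
    (hC : IsGraph EC) (hBc : ConnSet EB univ) (hf : ∀ x y, EB x y → EA (f x) (f y))
    (hg : Function.Surjective g) (hgc : IsConfluent EC EA g) {P : Set D}
    (hP : IsComponent ED univ P) : π₁ '' P = univ := by
  rcases isEmpty_or_nonempty B with hB₀ | ⟨⟨b⟩⟩
  · exact eq_univ_of_forall isEmptyElim
  have hED : ∀ x y, ED x y → ED y x := fun x y hxy => by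
    rw [h.adj_iff] at hxy ⊢
    exact ⟨hB.2 _ _ hxy.1, hC.2 _ _ hxy.2⟩
  obtain ⟨c, hc⟩ := hg (f b)
  obtain ⟨d, -⟩ := h.lift b c hc.symm
  refine hBc.eq_of_forall_adj_mem (subset_univ _) ((hP.nonempty ⟨d, trivial⟩).image π₁) ?_
  rintro _ ⟨d, hdP, rfl⟩ y - hy
  refine h.subset_image_fst_of_forall_adj hED hC.1 hf hgc hP ?_ hdP (mem_insert _ _)
    (mem_insert_of_mem _ rfl)
  rintro u (rfl | rfl) v (rfl | rfl)
  exacts [hB.1 _, hy, hB.2 _ _ hy, hB.1 _]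

end IsAmalgamation

theorem statement10_general {A B C : Type*}
    (EA : A → A → Prop) (EB : B → B → Prop) (EC : C → C → Prop)
    (hB : IsGraph EB) (hC : IsGraph EC)
    (hBc : ConnSet EB Set.univ) (hCc : ConnSet EC Set.univ)
    (f : B → A) (g : C → A)
    (hf : IsEpi EB EA f) (hg : IsEpi EC EA g)
    (hfconf : IsConfluent EB EA f) (hgconf : IsConfluent EC EA g) :
    ∀ P : Set (AmalgV f g), IsComponent (AmalgE EB EC f g) Set.univ P →
      amalgFst f g '' P = Set.univ ∧ amalgSnd f g '' P = Set.univ := fun _ hP =>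
  ⟨(isAmalgamation_amalg EB EC f g).image_fst_eq_univ hB hC hBc hf.1 hg.2.1 hgconf hP,
    (isAmalgamation_amalg EB EC f g).symm.image_fst_eq_univ hC hB hCc hg.1 hf.2.1 hfconf hP⟩

/-- If `A`, `B`, `C` are connected and `f`, `g` are confluent epimorphisms, then every
component of the standard amalgamation projects onto all of `B` and all of `C`. -/
theorem statement10 {A B C : Type*} [Fintype A] [Fintype B] [Fintype C]
    (EA : A → A → Prop) (EB : B → B → Prop) (EC : C → C → Prop)
    (hA : IsGraph EA) (hB : IsGraph EB) (hC : IsGraph EC)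
    (hAc : ConnSet EA Set.univ) (hBc : ConnSet EB Set.univ) (hCc : ConnSet EC Set.univ)
    (f : B → A) (g : C → A)
    (hf : IsEpi EB EA f) (hg : IsEpi EC EA g)
    (hfconf : IsConfluent EB EA f) (hgconf : IsConfluent EC EA g) :
    ∀ P : Set (AmalgV f g), IsComponent (AmalgE EB EC f g) Set.univ P →
      amalgFst f g '' P = Set.univ ∧ amalgSnd f g '' P = Set.univ :=
  statement10_general EA EB EC hB hC hBc hCc f g hf hg hfconf hgconf
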